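/- arXiv:2210.05985 — 2 statements merged into one kernel-verified Lean document; each statement's English description precedes it below -/
import Mathlib

section
/- Let δ₂ > 0, θ ∈ (0, π/4], and γ_j ∈ (0,1] for j = 1,…,n be chosen so that for each k ≤ n the quantity I_CHSH^k = 2^{2-k}(γ_k √δ₂ sin θ + cos θ ∏_{j=1}^{k-1}(1 + √(1-γ_j²))) exceeds 2. Then for every n there exists a choice of (θ, γ₁,…,γ_n) achieving I_CHSH^k > 2 for all k = 1,…,n. -/
/-!
Put `c = √δ₂` and take sharpnesses `γ_j = a_j θ` for a small angle `θ`. The bounds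
`sin θ ≥ θ / 2`, `cos θ ≥ 1 - θ² / 2`, `1 + √(1 - γ²) ≥ 2 - γ²` and the Weierstrass product
inequality give, with `w = 1 + ∑_{j<k} a_j²`,
`γ_k c sin θ + cos θ ∏_{j<k} (1 + √(1 - γ_j²)) ≥ 2^(k-1) + θ² (a_k c / 2 - 2^(k-2) w)`.
The coefficients `a_k = 2^k w / c` make the `θ²` term positive for every `k`, and `θ` is then
taken small enough that all `γ_j ≤ 1`.
-/

open Real Finset

theorem Finset.one_sub_sum_le_prod_one_sub {ι R : Type*} [CommRing R] [LinearOrder R]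
    [IsStrictOrderedRing R] [LinearOrder ι] (s : Finset ι) (f : ι → R)
    (h0 : ∀ i ∈ s, 0 ≤ f i) (h1 : ∀ i ∈ s, f i ≤ 1) :
    1 - ∑ i ∈ s, f i ≤ ∏ i ∈ s, (1 - f i) := by
  rw [prod_one_sub_ordered]
  gcongr with i hi
  refine mul_le_of_le_one_right (h0 i hi) (prod_le_one (fun j hj => ?_) fun j hj => ?_)
  all_goals
    have hj := (mem_filter.1 hj).1
    linarith [h0 j hj, h1 j hj]

theorem two_sub_sq_le_one_add_sqrt (x : ℝ) : 2 - x ^ 2 ≤ 1 + √(1 - x ^ 2) := by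
  have : 1 - x ^ 2 ≤ √(1 - x ^ 2) := le_sqrt_self_iff.2 (by nlinarith [sq_nonneg x])
  linarith

theorem pow_card_mul_le_prod_one_add_sqrt (s : Finset ℕ) (x : ℕ → ℝ)
    (hx : ∀ j ∈ s, x j ^ 2 ≤ 1) :
    2 ^ #s * (1 - (∑ j ∈ s, x j ^ 2) / 2) ≤ ∏ j ∈ s, (1 + √(1 - x j ^ 2)) :=
  calc 2 ^ #s * (1 - (∑ j ∈ s, x j ^ 2) / 2)
      = 2 ^ #s * (1 - ∑ j ∈ s, x j ^ 2 / 2) := by rw [sum_div]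
    _ ≤ 2 ^ #s * ∏ j ∈ s, (1 - x j ^ 2 / 2) := by
        gcongr
        exact one_sub_sum_le_prod_one_sub s _ (fun j _ => by positivity)
          fun j hj => by linarith [hx j hj]
    _ = ∏ j ∈ s, (2 - x j ^ 2) := by
        rw [← prod_const, ← prod_mul_distrib]
        exact prod_congr rfl fun j _ => by ring
    _ ≤ ∏ j ∈ s, (1 + √(1 - x j ^ 2)) :=
        prod_le_prod (fun j hj => by linarith [hx j hj]) fun j _ => two_sub_sq_le_one_add_sqrt _

theorem two_lt_zpow_two_sub_mul_iff (m : ℕ) (X : ℝ) :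
    2 < (2:ℝ) ^ ((2:ℤ) - ((m + 1 : ℕ) : ℤ)) * X ↔ 2 ^ m < X := by
  have : (2:ℤ) - ((m + 1 : ℕ) : ℤ) = 1 - m := by push_cast; ring
  rw [this, zpow_sub₀ two_ne_zero, zpow_one, zpow_natCast, div_mul_eq_mul_div,
    lt_div_iff₀ (by positivity)]
  constructor <;> intro h <;> linarith

noncomputable def sharpnessWeight (c : ℝ) : ℕ → ℝ
  | 0 => 1
  | m + 1 => sharpnessWeight c m + (2 ^ (m + 1) * sharpnessWeight c m / c) ^ 2

noncomputable def sharpnessCoeff (c : ℝ) (k : ℕ) : ℝ := 2 ^ k * sharpnessWeight c (k - 1) / c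

theorem one_le_sharpnessWeight (c : ℝ) (m : ℕ) : 1 ≤ sharpnessWeight c m := by
  induction m with
  | zero => rfl
  | succ m ih =>
    rw [sharpnessWeight]
    nlinarith [sq_nonneg (2 ^ (m + 1) * sharpnessWeight c m / c)]

theorem sharpnessWeight_succ (c : ℝ) (m : ℕ) :
    sharpnessWeight c (m + 1) = sharpnessWeight c m + sharpnessCoeff c (m + 1) ^ 2 := rfl

theorem sharpnessCoeff_pos {c : ℝ} (hc : 0 < c) (k : ℕ) : 0 < sharpnessCoeff c k := by
  have := one_le_sharpnessWeight c (k - 1)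
  unfold sharpnessCoeff
  positivity

theorem sum_sharpnessCoeff_sq (c : ℝ) (m : ℕ) :
    ∑ j ∈ Icc 1 m, sharpnessCoeff c j ^ 2 = sharpnessWeight c m - 1 := by
  induction m with
  | zero => simp [sharpnessWeight]
  | succ m ih =>
    rw [sum_Icc_succ_top (by omega), ih, sharpnessWeight_succ]
    ring

theorem sharpnessCoeff_succ_mul {c : ℝ} (hc : c ≠ 0) (m : ℕ) :
    sharpnessCoeff c (m + 1) * c = 2 ^ (m + 1) * sharpnessWeight c m := by
  simp [sharpnessCoeff, div_mul_cancel₀ _ hc]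

theorem pow_lt_chsh_sharpnessCoeff {c θ : ℝ} (hc : 0 < c) (hθ0 : 0 < θ) (hθ : θ ≤ π / 2)
    (m : ℕ) (hγ : ∀ j ∈ Icc 1 m, sharpnessCoeff c j * θ ≤ 1) :
    2 ^ m < sharpnessCoeff c (m + 1) * θ * c * sin θ +
      cos θ * ∏ j ∈ Icc 1 m, (1 + √(1 - (sharpnessCoeff c j * θ) ^ 2)) := by
  set w := sharpnessWeight c m
  have hw : 1 ≤ w := one_le_sharpnessWeight c m
  have hsum : ∑ j ∈ Icc 1 m, (sharpnessCoeff c j * θ) ^ 2 = θ ^ 2 * (w - 1) := by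
    rw [← sum_sharpnessCoeff_sq, mul_sum]
    exact sum_congr rfl fun j _ => by ring
  have hprod : 2 ^ m * (1 - θ ^ 2 * (w - 1) / 2) ≤
      ∏ j ∈ Icc 1 m, (1 + √(1 - (sharpnessCoeff c j * θ) ^ 2)) := by
    have h := pow_card_mul_le_prod_one_add_sqrt (Icc 1 m) (fun j => sharpnessCoeff c j * θ)
      fun j hj => pow_le_one₀ (mul_nonneg (sharpnessCoeff_pos hc j).le hθ0.le) (hγ j hj)
    rwa [hsum, Nat.card_Icc, add_tsub_cancel_right] at h
  have hsin : θ / 2 ≤ sin θ := by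
    have := mul_le_sin hθ0.le hθ
    have : θ / 2 ≤ 2 / π * θ := by
      rw [div_mul_eq_mul_div, le_div_iff₀ pi_pos]
      nlinarith [pi_le_four]
    linarith
  have hcos : 1 - θ ^ 2 / 2 ≤ cos θ := one_sub_sq_div_two_le_cos
  have hcos1 : cos θ ≤ 1 := cos_le_one θ
  have hcos0 : 0 ≤ cos θ := cos_nonneg_of_neg_pi_div_two_le_of_le (by linarith) hθ
  have hgain : 2 ^ m * (w * θ ^ 2) ≤ sharpnessCoeff c (m + 1) * θ * c * sin θ := by
    rw [mul_right_comm _ θ, sharpnessCoeff_succ_mul hc.ne']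
    have : 0 ≤ 2 ^ (m + 1) * w * θ := by positivity
    calc 2 ^ m * (w * θ ^ 2) = 2 ^ (m + 1) * w * θ * (θ / 2) := by ring
      _ ≤ _ := by gcongr
  have hloss : 2 ^ m * (1 - θ ^ 2 * w / 2) ≤
      cos θ * ∏ j ∈ Icc 1 m, (1 + √(1 - (sharpnessCoeff c j * θ) ^ 2)) := by
    have hX : 0 ≤ 2 ^ m * (θ ^ 2 * (w - 1)) := mul_nonneg (by positivity)
      (mul_nonneg (sq_nonneg θ) (by linarith))
    nlinarith [mul_le_mul_of_nonneg_left hprod hcos0, mul_nonneg (sub_nonneg.2 hcos1) hX,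
      mul_le_mul_of_nonneg_left hcos (pow_nonneg zero_le_two m : (0:ℝ) ≤ 2 ^ m)]
  have : 0 < 2 ^ m * (w * θ ^ 2) := by positivity
  linarith

open Real Finset in
/-- Unbounded CHSH sharing: for every n there is a choice of θ ∈ (0,π/4] and
sharpnesses γ₁,…,γₙ ∈ (0,1] such that every sequential CHSH value
I_CHSH^k = 2^{2-k}(γ_k √δ₂ sin θ + cos θ ∏_{j=1}^{k-1}(1+√(1-γ_j²))) exceeds 2. -/
theorem unbounded_sharing (δ₂ : ℝ) (hδ₂ : 0 < δ₂) (n : ℕ) :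
    ∃ θ : ℝ, θ ∈ Set.Ioc 0 (π / 4) ∧
    ∃ γ : ℕ → ℝ, (∀ j, 1 ≤ j → j ≤ n → γ j ∈ Set.Ioc (0:ℝ) 1) ∧
      ∀ k, 1 ≤ k → k ≤ n →
        2 < (2:ℝ) ^ ((2:ℤ) - (k:ℤ)) *
          (γ k * Real.sqrt δ₂ * Real.sin θ +
            Real.cos θ * ∏ j ∈ Finset.Icc 1 (k - 1), (1 + Real.sqrt (1 - γ j ^ 2))) := by
  have hc : 0 < √δ₂ := sqrt_pos.2 hδ₂
  set S := ∑ j ∈ Icc 1 n, sharpnessCoeff √δ₂ j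
  have hS : 0 ≤ S := sum_nonneg fun j _ => (sharpnessCoeff_pos hc j).le
  set θ := (2 * (1 + S))⁻¹
  have hθ0 : 0 < θ := by positivity
  have hθ : θ ≤ 1 / 2 := by
    rw [one_div]; exact inv_anti₀ two_pos (by linarith)
  have hγ : ∀ j ∈ Icc 1 n, sharpnessCoeff √δ₂ j * θ ≤ 1 := fun j hj => by
    rw [← div_eq_mul_inv, div_le_one (by positivity)]
    linarith [single_le_sum (fun i _ => (sharpnessCoeff_pos hc i).le) hj]
  refine ⟨θ, ⟨hθ0, by linarith [pi_gt_three]⟩, fun j => sharpnessCoeff √δ₂ j * θ,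
    fun j hj1 hjn => ⟨by have := sharpnessCoeff_pos hc j; positivity,
      hγ j (mem_Icc.2 ⟨hj1, hjn⟩)⟩, fun k hk1 hkn => ?_⟩
  obtain ⟨m, rfl⟩ : ∃ m, k = m + 1 := ⟨k - 1, by omega⟩
  rw [two_lt_zpow_two_sub_mul_iff, add_tsub_cancel_right]
  exact pow_lt_chsh_sharpnessCoeff hc hθ0 (by linarith [pi_gt_three]) m
    fun j hj => hγ j (Icc_subset_Icc_right (by omega) hj)
end

section
/- Under a 2-local hidden variable model, |I| ≤ ∫∫ q₁(λ)q₂(μ)|⟨A₀+A₁⟩_λ||⟨B₀⟩_{λ,μ}||⟨C₀+C₁⟩_μ| dλ dμ and |J| ≤ ∫∫ q₁(λ)q₂(μ)|⟨A₀−A₁⟩_λ||⟨C₀−C₁⟩_μ| dλ dμ, and since |⟨A₀+A₁⟩_λ| + |⟨A₀−A₁⟩_λ| ≤ 2 and similarly for C, the Cauchy–Schwarz-type estimate √|I| + √|J| ≤ 2 follows. -/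
/-!
With `a = |A₀ + A₁|`, `a' = |A₀ - A₁|`, `c = |C₀ + C₁|`, `c' = |C₀ - C₁|` one has `a + a' ≤ 2`,
`c + c' ≤ 2`, and `|I|`, `|J|` are bounded by `P = ∫∫ a |B₀| c`, `Q = ∫∫ a' |B₁| c'`.
Integrating out `λ`, the slice integrals `u(μ) = ∫ a |B₀(·, μ)|`, `u'(μ) = ∫ a' |B₁(·, μ)|`
satisfy `u(μ₁) + u'(μ₂) ≤ 2`, so `u ≤ α`, `u' ≤ β` for constants with `α + β ≤ 2`, and then
`P ≤ α γ`, `Q ≤ β γ'` with `γ + γ' ≤ 2`, whence `√P + √Q ≤ √((α + β)(γ + γ')) ≤ 2` by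
Cauchy–Schwarz. The responses need not be measurable, so `γ = ∫ c` is unavailable; one takes
`γ = P / α`, `γ' = Q / β` instead, and `γ + γ' ≤ 2` comes from integrating
`β u c + α u' c' ≤ α β (c + c')`. Nor is any slice integrability needed: a non-integrable
function has integral `0`.
-/

open MeasureTheory

theorem abs_add_add_abs_sub_le {x y r : ℝ} (hx : |x| ≤ r) (hy : |y| ≤ r) :
    |x + y| + |x - y| ≤ 2 * r := by
  rw [abs_le] at hx hy
  rcases abs_cases (x + y) with ⟨h₁, -⟩ | ⟨h₁, -⟩ <;>
    rcases abs_cases (x - y) with ⟨h₂, -⟩ | ⟨h₂, -⟩ <;> linarith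

theorem exists_add_eq_of_forall_add_le {ι κ : Type*} [Nonempty ι] [Nonempty κ]
    {f : ι → ℝ} {g : κ → ℝ} {C : ℝ} (h : ∀ i j, f i + g j ≤ C) :
    ∃ α β, α + β = C ∧ (∀ i, f i ≤ α) ∧ ∀ j, g j ≤ β := by
  obtain ⟨j₀⟩ := ‹Nonempty κ›
  have hbdd : BddAbove (Set.range f) := ⟨C - g j₀, by
    rintro _ ⟨i, rfl⟩
    linarith [h i j₀]⟩
  refine ⟨⨆ i, f i, C - ⨆ i, f i, by ring, fun i => le_ciSup hbdd i, fun j => ?_⟩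
  have : ⨆ i, f i ≤ C - g j := ciSup_le fun i => by linarith [h i j]
  linarith

theorem sqrt_add_sqrt_le_two {α β P Q : ℝ} (hα : 0 ≤ α) (hβ : 0 ≤ β) (hP : 0 ≤ P) (hQ : 0 ≤ Q)
    (hαβ : α + β ≤ 2) (hPα : P ≤ 2 * α) (hQβ : Q ≤ 2 * β)
    (hPQ : β * P + α * Q ≤ 2 * (α * β)) :
    √P + √Q ≤ 2 := by
  obtain ⟨p, hp, rfl⟩ : ∃ p, 0 ≤ p ∧ P = p ^ 2 := ⟨√P, Real.sqrt_nonneg P, (Real.sq_sqrt hP).symm⟩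
  obtain ⟨q, hq, rfl⟩ : ∃ q, 0 ≤ q ∧ Q = q ^ 2 := ⟨√Q, Real.sqrt_nonneg Q, (Real.sq_sqrt hQ).symm⟩
  rw [Real.sqrt_sq hp, Real.sqrt_sq hq]
  rcases hα.eq_or_lt with rfl | hα
  · have hp0 : p = 0 := by nlinarith
    nlinarith
  rcases hβ.eq_or_lt with rfl | hβ
  · have hq0 : q = 0 := by nlinarith
    nlinarith
  -- Cauchy–Schwarz: `α β (p + q)² ≤ (α + β) (β p² + α q²)`.
  have hCS : α * β * (p + q) ^ 2 ≤ α * β * 4 := by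
    nlinarith [sq_nonneg (α * q - β * p), mul_pos hα hβ]
  nlinarith [le_of_mul_le_mul_left hCS (mul_pos hα hβ)]

section Integral

variable {X : Type*} [MeasurableSpace X] {μ : Measure X} [IsProbabilityMeasure μ]

theorem integral_le_of_nonneg_of_le {f : X → ℝ} {C : ℝ} (hf : ∀ᵐ x ∂μ, 0 ≤ f x)
    (hfC : ∀ᵐ x ∂μ, f x ≤ C) : ∫ x, f x ∂μ ≤ C := by
  simpa using integral_mono_of_nonneg hf (integrable_const C) hfC

theorem integral_add_integral_le_of_add_le {f g : X → ℝ} {C : ℝ} (hf : ∀ᵐ x ∂μ, 0 ≤ f x)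
    (hg : ∀ᵐ x ∂μ, 0 ≤ g x) (hfgC : ∀ᵐ x ∂μ, f x + g x ≤ C) :
    ∫ x, f x ∂μ + ∫ x, g x ∂μ ≤ C := by
  have hfC : ∀ᵐ x ∂μ, f x ≤ C := by filter_upwards [hg, hfgC] with x h₁ h₂; linarith
  have hgC : ∀ᵐ x ∂μ, g x ≤ C := by filter_upwards [hf, hfgC] with x h₁ h₂; linarith
  by_cases hfi : Integrable f μ
  · by_cases hgi : Integrable g μ
    · rw [← integral_add hfi hgi]
      exact integral_le_of_nonneg_of_le (by filter_upwards [hf, hg] with x using add_nonneg) hfgC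
    · rw [integral_undef hgi, add_zero]
      exact integral_le_of_nonneg_of_le hf hfC
  · rw [integral_undef hfi, zero_add]
    exact integral_le_of_nonneg_of_le hg hgC

theorem sqrt_integral_add_sqrt_integral_le_two {V V' c c' : X → ℝ} {α β : ℝ}
    (hα : 0 ≤ α) (hβ : 0 ≤ β) (hαβ : α + β ≤ 2)
    (hV : ∀ᵐ x ∂μ, 0 ≤ V x) (hV' : ∀ᵐ x ∂μ, 0 ≤ V' x)
    (hc : ∀ᵐ x ∂μ, 0 ≤ c x) (hc' : ∀ᵐ x ∂μ, 0 ≤ c' x) (hcc' : ∀ᵐ x ∂μ, c x + c' x ≤ 2)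
    (hVc : ∀ᵐ x ∂μ, V x ≤ α * c x) (hV'c' : ∀ᵐ x ∂μ, V' x ≤ β * c' x) :
    √(∫ x, V x ∂μ) + √(∫ x, V' x ∂μ) ≤ 2 := by
  have hP : ∫ x, V x ∂μ ≤ 2 * α := integral_le_of_nonneg_of_le hV <| by
    filter_upwards [hc', hcc', hVc] with x h₁ h₂ h₃
    nlinarith
  have hQ : ∫ x, V' x ∂μ ≤ 2 * β := integral_le_of_nonneg_of_le hV' <| by
    filter_upwards [hc, hcc', hV'c'] with x h₁ h₂ h₃
    nlinarith
  have hPQ : β * ∫ x, V x ∂μ + α * ∫ x, V' x ∂μ ≤ 2 * (α * β) := by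
    rw [← integral_const_mul, ← integral_const_mul]
    refine integral_add_integral_le_of_add_le ?_ ?_ ?_
    · filter_upwards [hV] with x h using mul_nonneg hβ h
    · filter_upwards [hV'] with x h using mul_nonneg hα h
    · filter_upwards [hcc', hVc, hV'c'] with x h₁ h₂ h₃
      nlinarith [mul_le_mul_of_nonneg_left h₂ hβ, mul_le_mul_of_nonneg_left h₃ hα,
        mul_nonneg hα hβ]
  exact sqrt_add_sqrt_le_two hα hβ (integral_nonneg_of_ae hV) (integral_nonneg_of_ae hV') hαβ
    hP hQ hPQ

end Integral

section Bilocal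

variable {Λ M : Type*} [MeasurableSpace Λ] [MeasurableSpace M]
  {q₁ : Measure Λ} {q₂ : Measure M} [IsProbabilityMeasure q₁] [IsProbabilityMeasure q₂]

theorem sqrt_integral_prod_add_sqrt_integral_prod_le_two {a a' : Λ → ℝ} {b b' : Λ → M → ℝ}
    {c c' : M → ℝ} (ha : ∀ l, 0 ≤ a l) (ha' : ∀ l, 0 ≤ a' l) (haa' : ∀ l, a l + a' l ≤ 2)
    (hb : ∀ l m, 0 ≤ b l m) (hb' : ∀ l m, 0 ≤ b' l m)
    (hb₁ : ∀ l m, b l m ≤ 1) (hb'₁ : ∀ l m, b' l m ≤ 1)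
    (hc : ∀ m, 0 ≤ c m) (hc' : ∀ m, 0 ≤ c' m) (hcc' : ∀ m, c m + c' m ≤ 2)
    (hF : Integrable (fun p : Λ × M => a p.1 * b p.1 p.2 * c p.2) (q₁.prod q₂))
    (hG : Integrable (fun p : Λ × M => a' p.1 * b' p.1 p.2 * c' p.2) (q₁.prod q₂)) :
    √(∫ p, a p.1 * b p.1 p.2 * c p.2 ∂(q₁.prod q₂)) +
      √(∫ p, a' p.1 * b' p.1 p.2 * c' p.2 ∂(q₁.prod q₂)) ≤ 2 := by
  set u : M → ℝ := fun m => ∫ l, a l * b l m ∂q₁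
  set u' : M → ℝ := fun m => ∫ l, a' l * b' l m ∂q₁
  have hu : ∀ m, 0 ≤ u m := fun m => integral_nonneg fun l => mul_nonneg (ha l) (hb l m)
  have hu' : ∀ m, 0 ≤ u' m := fun m => integral_nonneg fun l => mul_nonneg (ha' l) (hb' l m)
  have huu' : ∀ m₁ m₂, u m₁ + u' m₂ ≤ 2 := fun m₁ m₂ =>
    integral_add_integral_le_of_add_le
      (ae_of_all _ fun l => mul_nonneg (ha l) (hb l m₁))
      (ae_of_all _ fun l => mul_nonneg (ha' l) (hb' l m₂))
      (ae_of_all _ fun l => by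
        nlinarith [haa' l, mul_le_of_le_one_right (ha l) (hb₁ l m₁),
          mul_le_of_le_one_right (ha' l) (hb'₁ l m₂)])
  have hM : Nonempty M := nonempty_of_isProbabilityMeasure q₂
  obtain ⟨α, β, hαβ, huα, hu'β⟩ := exists_add_eq_of_forall_add_le huu'
  obtain ⟨m₀⟩ := hM
  rw [integral_prod_symm _ hF, integral_prod_symm _ hG]
  simp only [integral_mul_const]
  exact sqrt_integral_add_sqrt_integral_le_two ((hu m₀).trans (huα m₀))
    ((hu' m₀).trans (hu'β m₀)) hαβ.le
    (ae_of_all _ fun m => mul_nonneg (hu m) (hc m))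
    (ae_of_all _ fun m => mul_nonneg (hu' m) (hc' m))
    (ae_of_all _ hc) (ae_of_all _ hc') (ae_of_all _ hcc')
    (ae_of_all _ fun m => mul_le_mul_of_nonneg_right (huα m) (hc m))
    (ae_of_all _ fun m => mul_le_mul_of_nonneg_right (hu'β m) (hc' m))

end Bilocal

open MeasureTheory in
theorem bilocality_inequality_general
    {Λ M : Type*} [MeasurableSpace Λ] [MeasurableSpace M]
    (q₁ : Measure Λ) (q₂ : Measure M)
    [IsProbabilityMeasure q₁] [IsProbabilityMeasure q₂]
    (A : Fin 2 → Λ → ℝ) (B : Fin 2 → Λ → M → ℝ) (C : Fin 2 → M → ℝ)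
    (hA : ∀ x l, |A x l| ≤ 1) (hB : ∀ y l m, |B y l m| ≤ 1) (hC : ∀ z m, |C z m| ≤ 1)
    (hIint : Integrable (fun p : Λ × M =>
      (A 0 p.1 + A 1 p.1) * B 0 p.1 p.2 * (C 0 p.2 + C 1 p.2)) (q₁.prod q₂))
    (hJint : Integrable (fun p : Λ × M =>
      (A 0 p.1 - A 1 p.1) * B 1 p.1 p.2 * (C 0 p.2 - C 1 p.2)) (q₁.prod q₂))
    (I J : ℝ)
    (hI : I = ∫ p, (A 0 p.1 + A 1 p.1) * B 0 p.1 p.2 * (C 0 p.2 + C 1 p.2) ∂(q₁.prod q₂))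
    (hJ : J = ∫ p, (A 0 p.1 - A 1 p.1) * B 1 p.1 p.2 * (C 0 p.2 - C 1 p.2) ∂(q₁.prod q₂)) :
    |I| ≤ (∫ p, |A 0 p.1 + A 1 p.1| * |B 0 p.1 p.2| * |C 0 p.2 + C 1 p.2| ∂(q₁.prod q₂)) ∧
    |J| ≤ (∫ p, |A 0 p.1 - A 1 p.1| * |B 1 p.1 p.2| * |C 0 p.2 - C 1 p.2| ∂(q₁.prod q₂)) ∧
    Real.sqrt |I| + Real.sqrt |J| ≤ 2 := by
  have hI_le : |I| ≤ ∫ p, |A 0 p.1 + A 1 p.1| * |B 0 p.1 p.2| * |C 0 p.2 + C 1 p.2|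
      ∂(q₁.prod q₂) := by
    rw [hI]
    exact abs_integral_le_integral_abs.trans_eq (by simp only [abs_mul])
  have hJ_le : |J| ≤ ∫ p, |A 0 p.1 - A 1 p.1| * |B 1 p.1 p.2| * |C 0 p.2 - C 1 p.2|
      ∂(q₁.prod q₂) := by
    rw [hJ]
    exact abs_integral_le_integral_abs.trans_eq (by simp only [abs_mul])
  have hsqrt := sqrt_integral_prod_add_sqrt_integral_prod_le_two
    (fun _ => abs_nonneg _) (fun _ => abs_nonneg _)
    (fun l => by simpa only [mul_one] using abs_add_add_abs_sub_le (hA 0 l) (hA 1 l))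
    (fun _ _ => abs_nonneg _) (fun _ _ => abs_nonneg _) (hB 0) (hB 1)
    (fun _ => abs_nonneg _) (fun _ => abs_nonneg _)
    (fun m => by simpa only [mul_one] using abs_add_add_abs_sub_le (hC 0 m) (hC 1 m))
    (by simpa only [abs_mul] using hIint.abs) (by simpa only [abs_mul] using hJint.abs)
  exact ⟨hI_le, hJ_le,
    (add_le_add (Real.sqrt_le_sqrt hI_le) (Real.sqrt_le_sqrt hJ_le)).trans hsqrt⟩

open MeasureTheory in
/-- In a 2-local hidden variable model with densities q₁, q₂ and local response
expectations A_x(λ), B_y(λ,μ), C_z(μ) ∈ [-1,1], the correlators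
I = ∫∫ (A₀+A₁)B₀(C₀+C₁) and J = ∫∫ (A₀-A₁)B₁(C₀-C₁) satisfy the triangle-inequality
bounds and the bilocality inequality √|I| + √|J| ≤ 2. -/
theorem bilocality_inequality
    {Λ M : Type*} [MeasurableSpace Λ] [MeasurableSpace M]
    (q₁ : Measure Λ) (q₂ : Measure M)
    [IsProbabilityMeasure q₁] [IsProbabilityMeasure q₂] [SFinite q₂]
    (A : Fin 2 → Λ → ℝ) (B : Fin 2 → Λ → M → ℝ) (C : Fin 2 → M → ℝ)
    (hA : ∀ x l, |A x l| ≤ 1) (hB : ∀ y l m, |B y l m| ≤ 1) (hC : ∀ z m, |C z m| ≤ 1)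
    (hIint : Integrable (fun p : Λ × M =>
      (A 0 p.1 + A 1 p.1) * B 0 p.1 p.2 * (C 0 p.2 + C 1 p.2)) (q₁.prod q₂))
    (hJint : Integrable (fun p : Λ × M =>
      (A 0 p.1 - A 1 p.1) * B 1 p.1 p.2 * (C 0 p.2 - C 1 p.2)) (q₁.prod q₂))
    (I J : ℝ)
    (hI : I = ∫ p, (A 0 p.1 + A 1 p.1) * B 0 p.1 p.2 * (C 0 p.2 + C 1 p.2) ∂(q₁.prod q₂))
    (hJ : J = ∫ p, (A 0 p.1 - A 1 p.1) * B 1 p.1 p.2 * (C 0 p.2 - C 1 p.2) ∂(q₁.prod q₂)) :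
    |I| ≤ (∫ p, |A 0 p.1 + A 1 p.1| * |B 0 p.1 p.2| * |C 0 p.2 + C 1 p.2| ∂(q₁.prod q₂)) ∧
    |J| ≤ (∫ p, |A 0 p.1 - A 1 p.1| * |B 1 p.1 p.2| * |C 0 p.2 - C 1 p.2| ∂(q₁.prod q₂)) ∧
    Real.sqrt |I| + Real.sqrt |J| ≤ 2 :=
  bilocality_inequality_general q₁ q₂ A B C hA hB hC hIint hJint I J hI hJ
end
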